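/- The Schoen quintic has exactly 125 singular points in ℙ⁴(ℂ), namely the points [1 : ζᵃ : ζᵇ : ζᶜ : ζ^{-a-b-c}] where ζ = e^{2πi/5} and 0 ≤ a,b,c < 5. -/
import Mathlib


open Complex

/-- The singular locus of the Schoen quintic in `ℙ⁴(ℂ)` consists of exactly the
125 pairwise distinct points `[1 : ζᵃ : ζᵇ : ζᶜ : ζ^{-a-b-c}]`, `ζ = e^{2πi/5}`,
`0 ≤ a,b,c < 5`. -/
theorem schoen_quintic_singular_locus
    (ζ : ℂ) (hζ : ζ = Complex.exp (2 * Real.pi * Complex.I / 5))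
    (Sing : Set (Projectivization ℂ (Fin 5 → ℂ)))
    (hSing : Sing = {P | ∃ (v : Fin 5 → ℂ) (hv : v ≠ 0),
      P = Projectivization.mk ℂ v hv ∧
      5 * v 0 ^ 4 - 5 * (v 1 * v 2 * v 3 * v 4) = 0 ∧
      5 * v 1 ^ 4 - 5 * (v 0 * v 2 * v 3 * v 4) = 0 ∧
      5 * v 2 ^ 4 - 5 * (v 0 * v 1 * v 3 * v 4) = 0 ∧
      5 * v 3 ^ 4 - 5 * (v 0 * v 1 * v 2 * v 4) = 0 ∧
      5 * v 4 ^ 4 - 5 * (v 0 * v 1 * v 2 * v 3) = 0})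
    (pt : Fin 5 → Fin 5 → Fin 5 → Projectivization ℂ (Fin 5 → ℂ))
    (hpt : ∀ a b c : Fin 5, ∃ hv : (![1, ζ ^ (a : ℕ), ζ ^ (b : ℕ), ζ ^ (c : ℕ),
        ζ ^ ((-(a : ℤ) - b - c : ℤ))] : Fin 5 → ℂ) ≠ 0,
      pt a b c = Projectivization.mk ℂ _ hv) :
    Sing = {P | ∃ a b c : Fin 5, P = pt a b c} ∧
    Set.ncard Sing = 125 ∧
    Function.Injective fun x : Fin 5 × Fin 5 × Fin 5 => pt x.1 x.2.1 x.2.2 := by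
  have hprim : IsPrimitiveRoot ζ 5 := hζ ▸ Complex.isPrimitiveRoot_exp 5 (by norm_num)
  have hz0 : ζ ≠ 0 := hprim.ne_zero (by norm_num)
  have hz5 : ζ ^ (5 : ℕ) = 1 := hprim.pow_eq_one
  have hz5' : ζ ^ (5 : ℤ) = 1 := by
    rw [show (5 : ℤ) = ((5 : ℕ) : ℤ) by norm_num, zpow_natCast, hz5]
  have hzkey : ∀ m n : ℤ, (5 : ℤ) ∣ m - n → ζ ^ m = ζ ^ n := by
    rintro m n ⟨k, hk⟩
    have hm : m = n + 5 * k := by linarith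
    rw [hm, zpow_add₀ hz0, zpow_mul, hz5', one_zpow, mul_one]
  -- injectivity
  have hinj : Function.Injective fun x : Fin 5 × Fin 5 × Fin 5 => pt x.1 x.2.1 x.2.2 := by
    rintro ⟨a, b, c⟩ ⟨a', b', c'⟩ h
    simp only at h
    obtain ⟨hv1, hpt1⟩ := hpt a b c
    obtain ⟨hv2, hpt2⟩ := hpt a' b' c'
    rw [hpt1, hpt2, Projectivization.mk_eq_mk_iff] at h
    obtain ⟨u, hu⟩ := h
    have h0 := congrFun hu 0
    have h1 := congrFun hu 1
    have h2 := congrFun hu 2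
    have h3 := congrFun hu 3
    simp only [Pi.smul_apply, Matrix.cons_val_zero, Matrix.cons_val_one, Matrix.head_cons,
      Matrix.cons_val_two, Matrix.cons_val_three, Matrix.tail_cons, Units.smul_def,
      smul_eq_mul, mul_one] at h0 h1 h2 h3
    -- h0 : (u : ℂ) = 1
    rw [h0, one_mul] at h1 h2 h3
    have ha : a' = a := Fin.ext (hprim.pow_inj a'.isLt a.isLt h1)
    have hb : b' = b := Fin.ext (hprim.pow_inj b'.isLt b.isLt h2)
    have hc : c' = c := Fin.ext (hprim.pow_inj c'.isLt c.isLt h3)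
    simp [ha, hb, hc]
  have hmerge : ∀ x y z : ℕ, (1:ℂ) * ζ ^ x * ζ ^ y * ζ ^ (-(z:ℤ)) =
      ζ ^ ((x : ℤ) + y - z) := by
    intro x y z
    rw [one_mul, ← zpow_natCast ζ x, ← zpow_natCast ζ y, ← zpow_add₀ hz0, ← zpow_add₀ hz0]
    ring_nf
  have hpow4 : ∀ m : ℤ, (ζ ^ m) ^ (4:ℕ) = ζ ^ (4 * m) := by
    intro m
    rw [← zpow_natCast (ζ ^ m) 4, ← zpow_mul]
    ring_nf
  have main0 : ∀ x y z : ℕ, 5 * (1:ℂ) ^ 4 - 5 * (ζ ^ x * ζ ^ y * ζ ^ z *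
      ζ ^ (-(x:ℤ) - y - z)) = 0 := by
    intro x y z
    have h : ζ ^ x * ζ ^ y * ζ ^ z * ζ ^ (-(x:ℤ) - y - z) = 1 := by
      rw [← zpow_natCast ζ x, ← zpow_natCast ζ y, ← zpow_natCast ζ z,
        ← zpow_add₀ hz0, ← zpow_add₀ hz0, ← zpow_add₀ hz0,
        show ((x:ℤ) + y + z + (-(x:ℤ) - y - z)) = 0 by ring, zpow_zero]
    rw [h]; norm_num
  have main1 : ∀ x y z : ℕ, 5 * ((ζ:ℂ) ^ x) ^ 4 - 5 * (1 * ζ ^ y * ζ ^ z *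
      ζ ^ (-(x:ℤ) - y - z)) = 0 := by
    intro x y z
    have h1 : ((ζ:ℂ) ^ x) ^ (4:ℕ) = ζ ^ ((4 * x : ℤ)) := by
      rw [← zpow_natCast ζ x, hpow4]
    have h2 : (1:ℂ) * ζ ^ y * ζ ^ z * ζ ^ (-(x:ℤ) - y - z) =
        ζ ^ ((y:ℤ) + z + (-(x:ℤ) - y - z)) := by
      rw [one_mul, ← zpow_natCast ζ y, ← zpow_natCast ζ z, ← zpow_add₀ hz0, ← zpow_add₀ hz0]
    rw [h1, h2, hzkey (4 * x) ((y:ℤ) + z + (-(x:ℤ) - y - z)) (by omega)]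
    ring
  have main2 : ∀ x y z : ℕ, 5 * ((ζ:ℂ) ^ y) ^ 4 - 5 * (1 * ζ ^ x * ζ ^ z *
      ζ ^ (-(x:ℤ) - y - z)) = 0 := by
    intro x y z
    have h1 : ((ζ:ℂ) ^ y) ^ (4:ℕ) = ζ ^ ((4 * y : ℤ)) := by
      rw [← zpow_natCast ζ y, hpow4]
    have h2 : (1:ℂ) * ζ ^ x * ζ ^ z * ζ ^ (-(x:ℤ) - y - z) =
        ζ ^ ((x:ℤ) + z + (-(x:ℤ) - y - z)) := by
      rw [one_mul, ← zpow_natCast ζ x, ← zpow_natCast ζ z, ← zpow_add₀ hz0, ← zpow_add₀ hz0]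
    rw [h1, h2, hzkey (4 * y) ((x:ℤ) + z + (-(x:ℤ) - y - z)) (by omega)]
    ring
  have main3 : ∀ x y z : ℕ, 5 * ((ζ:ℂ) ^ z) ^ 4 - 5 * (1 * ζ ^ x * ζ ^ y *
      ζ ^ (-(x:ℤ) - y - z)) = 0 := by
    intro x y z
    have h1 : ((ζ:ℂ) ^ z) ^ (4:ℕ) = ζ ^ ((4 * z : ℤ)) := by
      rw [← zpow_natCast ζ z, hpow4]
    have h2 : (1:ℂ) * ζ ^ x * ζ ^ y * ζ ^ (-(x:ℤ) - y - z) =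
        ζ ^ ((x:ℤ) + y + (-(x:ℤ) - y - z)) := by
      rw [one_mul, ← zpow_natCast ζ x, ← zpow_natCast ζ y, ← zpow_add₀ hz0, ← zpow_add₀ hz0]
    rw [h1, h2, hzkey (4 * z) ((x:ℤ) + y + (-(x:ℤ) - y - z)) (by omega)]
    ring
  have main4 : ∀ x y z : ℕ, 5 * ((ζ:ℂ) ^ (-(x:ℤ) - y - z)) ^ 4 - 5 * (1 * ζ ^ x * ζ ^ y *
      ζ ^ z) = 0 := by
    intro x y z
    have h2 : (1:ℂ) * ζ ^ x * ζ ^ y * ζ ^ z = ζ ^ ((x:ℤ) + y + z) := by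
      rw [one_mul, ← zpow_natCast ζ x, ← zpow_natCast ζ y, ← zpow_natCast ζ z,
        ← zpow_add₀ hz0, ← zpow_add₀ hz0]
    rw [h2, hpow4, hzkey (4 * (-(x:ℤ) - y - z)) ((x:ℤ) + y + z) (by omega)]
    ring
  have hmem : ∀ a b c : Fin 5, pt a b c ∈ Sing := by
    intro a b c
    obtain ⟨hv, hpteq⟩ := hpt a b c
    rw [hSing]
    refine ⟨_, hv, hpteq, ?_, ?_, ?_, ?_, ?_⟩ <;>
      simp only [Matrix.cons_val_zero, Matrix.cons_val_one, Matrix.head_cons,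
        Matrix.cons_val_two, Matrix.cons_val_three, Matrix.cons_val_four, Matrix.tail_cons]
    · exact main0 a b c
    · exact main1 a b c
    · exact main2 a b c
    · exact main3 a b c
    · exact main4 a b c
  have hSeq : Sing = {P | ∃ a b c : Fin 5, P = pt a b c} := by
    apply Set.Subset.antisymm
    · rw [hSing]
      rintro P ⟨v, hv, rfl, e0, e1, e2, e3, e4⟩
      have g0 : v 0 ^ 5 = v 0 * v 1 * v 2 * v 3 * v 4 := by linear_combination v 0 / 5 * e0
      have g1 : v 1 ^ 5 = v 0 * v 1 * v 2 * v 3 * v 4 := by linear_combination v 1 / 5 * e1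
      have g2 : v 2 ^ 5 = v 0 * v 1 * v 2 * v 3 * v 4 := by linear_combination v 2 / 5 * e2
      have g3 : v 3 ^ 5 = v 0 * v 1 * v 2 * v 3 * v 4 := by linear_combination v 3 / 5 * e3
      have g4 : v 4 ^ 5 = v 0 * v 1 * v 2 * v 3 * v 4 := by linear_combination v 4 / 5 * e4
      have hv0 : v 0 ≠ 0 := by
        intro h
        have hPr : v 0 * v 1 * v 2 * v 3 * v 4 = 0 := by rw [← g0, h]; ring
        have z1 : v 1 = 0 := by
          have : v 1 ^ 5 = 0 := by rw [g1, hPr]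
          exact pow_eq_zero_iff (by norm_num) |>.mp this
        have z2 : v 2 = 0 := by
          have : v 2 ^ 5 = 0 := by rw [g2, hPr]
          exact pow_eq_zero_iff (by norm_num) |>.mp this
        have z3 : v 3 = 0 := by
          have : v 3 ^ 5 = 0 := by rw [g3, hPr]
          exact pow_eq_zero_iff (by norm_num) |>.mp this
        have z4 : v 4 = 0 := by
          have : v 4 ^ 5 = 0 := by rw [g4, hPr]
          exact pow_eq_zero_iff (by norm_num) |>.mp this
        apply hv
        funext i
        fin_cases i
        · exact h
        · exact z1
        · exact z2
        · exact z3
        · exact z4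
      have hv05 : v 0 ^ 5 ≠ 0 := pow_ne_zero _ hv0
      have w1 : (v 1 / v 0) ^ 5 = 1 := by
        rw [div_pow, g1, ← g0, div_self hv05]
      have w2 : (v 2 / v 0) ^ 5 = 1 := by
        rw [div_pow, g2, ← g0, div_self hv05]
      have w3 : (v 3 / v 0) ^ 5 = 1 := by
        rw [div_pow, g3, ← g0, div_self hv05]
      have w4 : (v 4 / v 0) ^ 5 = 1 := by
        rw [div_pow, g4, ← g0, div_self hv05]
      obtain ⟨a, ha5, ha⟩ := hprim.eq_pow_of_pow_eq_one w1
      obtain ⟨b, hb5, hb⟩ := hprim.eq_pow_of_pow_eq_one w2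
      obtain ⟨c, hc5, hc⟩ := hprim.eq_pow_of_pow_eq_one w3
      obtain ⟨d, hd5, hd⟩ := hprim.eq_pow_of_pow_eq_one w4
      rw [eq_div_iff hv0] at ha hb hc hd
      -- sum condition
      have hsum : ζ ^ (a + b + c + d) = 1 := by
        have key : v 0 ^ 5 * ζ ^ (a + b + c + d) = v 0 ^ 5 * 1 := by
          rw [mul_one, g0, pow_add, pow_add, pow_add]
          linear_combination (ζ^b * ζ^c * ζ^d * v 0^4) * ha + (ζ^c * ζ^d * v 0^3 * v 1) * hb +
            (ζ^d * v 0^2 * v 1 * v 2) * hc + (v 0 * v 1 * v 2 * v 3) * hd -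
            (ζ^a * ζ^b * ζ^c * ζ^d) * g0
        exact mul_left_cancel₀ hv05 key
      obtain ⟨k, hk⟩ := (hprim.pow_eq_one_iff_dvd _).mp hsum
      refine ⟨⟨a, ha5⟩, ⟨b, hb5⟩, ⟨c, hc5⟩, ?_⟩
      obtain ⟨hw, hpteq⟩ := hpt ⟨a, ha5⟩ ⟨b, hb5⟩ ⟨c, hc5⟩
      rw [hpteq, Projectivization.mk_eq_mk_iff']
      refine ⟨v 0, funext fun i => ?_⟩
      have hzd : ζ ^ ((-(a : ℤ) - b - c : ℤ)) = ζ ^ (d : ℕ) := by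
        rw [← zpow_natCast ζ d]
        apply hzkey
        refine ⟨-(k : ℤ), ?_⟩
        push_cast
        omega
      fin_cases i
      · show v 0 * (1 : ℂ) = v 0
        rw [mul_one]
      · show v 0 * ζ ^ (a : ℕ) = v 1
        rw [← ha]; ring
      · show v 0 * ζ ^ (b : ℕ) = v 2
        rw [← hb]; ring
      · show v 0 * ζ ^ (c : ℕ) = v 3
        rw [← hc]; ring
      · show v 0 * ζ ^ ((-(a : ℤ) - b - c : ℤ)) = v 4
        rw [hzd, ← hd]; ring
    · rintro P ⟨a, b, c, rfl⟩
      exact hmem a b c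
  have hrange : {P | ∃ a b c : Fin 5, P = pt a b c} =
      Set.range (fun x : Fin 5 × Fin 5 × Fin 5 => pt x.1 x.2.1 x.2.2) := by
    ext P
    constructor
    · rintro ⟨a, b, c, rfl⟩; exact ⟨⟨a, b, c⟩, rfl⟩
    · rintro ⟨⟨a, b, c⟩, rfl⟩; exact ⟨a, b, c, rfl⟩
  have hcard : Set.ncard Sing = 125 := by
    rw [hSeq, hrange, ← Set.image_univ, Set.ncard_image_of_injective _ hinj, Set.ncard_univ]
    simp [Nat.card_eq_fintype_card]
  exact ⟨hSeq, hcard, hinj⟩
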